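/- arXiv:1706.05681 — 8 statements merged into one kernel-verified Lean document; each statement's English description precedes it below -/
import Mathlib

section
/- Let X be a compact convex subset of R^d and let g : R^d -> R be continuously differentiable on a neighborhood of X. Suppose C is a nonempty subset of X such that <grad g(x), x - p> >= 0 for all x in X and all p in C, with equality if and only if x in C. Then C is closed, C is convex, and C consists precisely of the global minimizers of g over X, i.e. C = argmin_{x in X} g(x). -/
/-! Along the segment from `p ∈ C` to `y ∈ X` the coherence inequality says that `g` has
nonnegative slope, so every point of `C` minimizes `g` on `X`. Conversely, at a minimizer `x` the
first-order condition gives `⟪∇g(x), p - x⟫ ≥ 0`, which together with coherence forces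
`⟪∇g(x), x - p⟫ = 0`, i.e. `x ∈ C`. Closedness holds because `C` is the zero set in `X` of the
continuous function `x ↦ ⟪∇g(x), x - p⟫`. -/

open Set
open scoped RealInnerProductSpace

section FirstOrder

variable {E : Type*} [NormedAddCommGroup E] [NormedSpace ℝ E] {f : E → ℝ} {s : Set E} {a : E}

theorem IsMinOn.fderiv_apply_sub_nonneg (h : IsMinOn f s a) (hs : StarConvex ℝ a s)
    (hf : DifferentiableAt ℝ f a) {y : E} (hy : y ∈ s) : 0 ≤ fderiv ℝ f a (y - a) :=
  h.localize.hasFDerivWithinAt_nonneg hf.hasFDerivAt.hasFDerivWithinAt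
    (sub_mem_posTangentConeAt_of_segment_subset (hs.segment_subset hy))

theorem StarConvex.isMinOn_of_fderiv_apply_sub_nonneg (hs : StarConvex ℝ a s)
    (hf : ∀ x ∈ s, DifferentiableAt ℝ f x) (h : ∀ x ∈ s, 0 ≤ fderiv ℝ f x (x - a)) :
    IsMinOn f s a := by
  intro y hy
  have hseg : ∀ t ∈ Icc (0 : ℝ) 1, a + t • (y - a) ∈ s := fun t ht =>
    hs.add_smul_sub_mem hy ht.1 ht.2
  have hderiv : ∀ t ∈ Icc (0 : ℝ) 1, HasDerivAt (fun t : ℝ => f (a + t • (y - a)))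
      (fderiv ℝ f (a + t • (y - a)) (y - a)) t := by
    intro t ht
    have hline : HasDerivAt (fun t : ℝ => a + t • (y - a)) (y - a) t := by
      simpa using ((hasDerivAt_id t).smul_const (y - a)).const_add a
    exact (hf _ (hseg t ht)).hasFDerivAt.comp_hasDerivAt t hline
  have hmono : MonotoneOn (fun t : ℝ => f (a + t • (y - a))) (Icc 0 1) := by
    refine monotoneOn_of_hasDerivWithinAt_nonneg (convex_Icc 0 1)
      (fun t ht => (hderiv t ht).continuousAt.continuousWithinAt)
      (fun t ht => (hderiv t (interior_subset ht)).hasDerivWithinAt) fun t ht => ?_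
    rw [interior_Icc] at ht
    have hslope := h _ (hseg t (Ioo_subset_Icc_self ht))
    rw [add_sub_cancel_left, map_smul, smul_eq_mul] at hslope
    exact nonneg_of_mul_nonneg_right hslope ht.1
  simpa using hmono (left_mem_Icc.2 zero_le_one) (right_mem_Icc.2 zero_le_one) zero_le_one

end FirstOrder

section Coherence

variable {E : Type*} [NormedAddCommGroup E] [InnerProductSpace ℝ E]

def VariationallyCoherent (F : E → E) (X C : Set E) : Prop :=
  ∀ x ∈ X, ∀ p ∈ C, 0 ≤ ⟪F x, x - p⟫ ∧ (⟪F x, x - p⟫ = 0 ↔ x ∈ C)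

namespace VariationallyCoherent

variable {F : E → E} {X C : Set E} {p : E}

theorem eq_inter_preimage (h : VariationallyCoherent F X C) (hCX : C ⊆ X) (hp : p ∈ C) :
    C = X ∩ (fun x => ⟪F x, x - p⟫) ⁻¹' {0} := by
  ext x
  exact ⟨fun hx => ⟨hCX hx, (h x (hCX hx) p hp).2.2 hx⟩, fun hx => (h x hx.1 p hp).2.1 hx.2⟩

theorem isClosed (h : VariationallyCoherent F X C) (hCX : C ⊆ X) (hC : C.Nonempty)
    (hX : IsClosed X) (hF : ContinuousOn F X) : IsClosed C := by
  obtain ⟨p, hp⟩ := hC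
  rw [h.eq_inter_preimage hCX hp]
  exact (hF.inner (continuousOn_id.sub continuousOn_const)).preimage_isClosed_of_isClosed hX
    isClosed_singleton

theorem convex (h : VariationallyCoherent F X C) (hCX : C ⊆ X) (hX : Convex ℝ X) :
    Convex ℝ C := by
  refine convex_iff_forall_pos.2 fun p hp q hq a b ha hb hab => ?_
  set x := a • p + b • q
  have hxX : x ∈ X := hX (hCX hp) (hCX hq) ha.le hb.le hab
  -- the two nonnegative terms are weighted with `a, b > 0` and sum to `⟪F x, x - x⟫ = 0`
  have hsum : a * ⟪F x, x - p⟫ + b * ⟪F x, x - q⟫ = 0 := by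
    have hx : a • (x - p) + b • (x - q) = 0 := by
      rw [smul_sub, smul_sub, sub_add_sub_comm, ← add_smul, hab, one_smul, sub_self]
    rw [← real_inner_smul_right, ← real_inner_smul_right, ← inner_add_right, hx,
      inner_zero_right]
  have hp0 := (h x hxX p hp).1
  have hq0 := (h x hxX q hq).1
  exact (h x hxX p hp).2.1 (by nlinarith)

variable {g : E → ℝ} [CompleteSpace E]

theorem isMinOn (h : VariationallyCoherent (gradient g) X C) (hCX : C ⊆ X) (hX : Convex ℝ X)
    (hg : ∀ x ∈ X, DifferentiableAt ℝ g x) (hp : p ∈ C) : IsMinOn g X p :=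
  (hX.starConvex (hCX hp)).isMinOn_of_fderiv_apply_sub_nonneg hg fun x hx => by
    simpa using (h x hx p hp).1

theorem mem_of_isMinOn (h : VariationallyCoherent (gradient g) X C) (hCX : C ⊆ X)
    (hC : C.Nonempty) (hX : Convex ℝ X) {x : E} (hx : x ∈ X) (hmin : IsMinOn g X x)
    (hgx : DifferentiableAt ℝ g x) : x ∈ C := by
  obtain ⟨p, hp⟩ := hC
  have hfirst : 0 ≤ ⟪gradient g x, p - x⟫ := by
    simpa using hmin.fderiv_apply_sub_nonneg (hX.starConvex hx) hgx (hCX hp)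
  rw [← neg_sub, inner_neg_right, neg_nonneg] at hfirst
  exact (h x hx p hp).2.1 (le_antisymm hfirst (h x hx p hp).1)

theorem eq_setOf_isMinOn (h : VariationallyCoherent (gradient g) X C) (hCX : C ⊆ X)
    (hC : C.Nonempty) (hX : Convex ℝ X) (hg : ∀ x ∈ X, DifferentiableAt ℝ g x) :
    C = {x ∈ X | ∀ y ∈ X, g x ≤ g y} := by
  ext x
  refine ⟨fun hx => ⟨hCX hx, isMinOn_iff.1 (h.isMinOn hCX hX hg hx)⟩, fun hx => ?_⟩
  exact h.mem_of_isMinOn hCX hC hX hx.1 (isMinOn_iff.2 hx.2) (hg x hx.1)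

end VariationallyCoherent

end Coherence

/-- If a nonempty subset `C` of a compact convex set `X ⊆ ℝ^d` satisfies the
variational coherence condition `⟪∇g(x), x - p⟫ ≥ 0` for all `x ∈ X`, `p ∈ C`, with equality
iff `x ∈ C`, then `C` is closed, convex, and equals the set of global minimizers of `g` on `X`. -/
theorem coherent_set_closed_convex_eq_argmin {d : ℕ}
    (X : Set (EuclideanSpace ℝ (Fin d))) (hXcompact : IsCompact X) (hXconvex : Convex ℝ X)
    (g : EuclideanSpace ℝ (Fin d) → ℝ)
    (U : Set (EuclideanSpace ℝ (Fin d))) (hUopen : IsOpen U) (hXU : X ⊆ U)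
    (hgC1 : ContDiffOn ℝ 1 g U)
    (C : Set (EuclideanSpace ℝ (Fin d))) (hCne : C.Nonempty) (hCX : C ⊆ X)
    (hcoh : ∀ x ∈ X, ∀ p ∈ C, 0 ≤ ⟪gradient g x, x - p⟫ ∧
      (⟪gradient g x, x - p⟫ = 0 ↔ x ∈ C)) :
    IsClosed C ∧ Convex ℝ C ∧ C = {x ∈ X | ∀ y ∈ X, g x ≤ g y} := by
  have hcoh : VariationallyCoherent (gradient g) X C := hcoh
  have hdiff : ∀ x ∈ X, DifferentiableAt ℝ g x := fun x hx =>
    (hgC1.differentiableOn one_ne_zero).differentiableAt (hUopen.mem_nhds (hXU hx))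
  have hgrad : ContinuousOn (gradient g) X :=
    (InnerProductSpace.toDual ℝ _).symm.continuous.comp_continuousOn
      ((hgC1.continuousOn_fderiv_of_isOpen hUopen le_rfl).mono hXU)
  exact ⟨hcoh.isClosed hCX hCne hXcompact.isClosed hgrad, hcoh.convex hCX hXconvex,
    hcoh.eq_setOf_isMinOn hCX hCne hXconvex hdiff⟩
end

section
/- Let X be a compact convex subset of R^d and let g : R^d -> R be continuously differentiable on a neighborhood of X, with X* = argmin_{x in X} g(x). If the problem is variationally coherent, i.e. <grad g(x), x - x*> >= 0 for all x in X and all x* in X*, with equality if and only if x in X*, then X* is convex and compact. -/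
open scoped RealInnerProductSpace

/-- If the problem `min_{x ∈ X} g(x)` is variationally coherent, then the solution
set `X* = argmin_{x ∈ X} g` is convex and compact. -/
theorem argmin_convex_compact_of_variationally_coherent {d : ℕ}
    (X : Set (EuclideanSpace ℝ (Fin d))) (hXcompact : IsCompact X) (hXconvex : Convex ℝ X)
    (g : EuclideanSpace ℝ (Fin d) → ℝ)
    (U : Set (EuclideanSpace ℝ (Fin d))) (hUopen : IsOpen U) (hXU : X ⊆ U)
    (hgC1 : ContDiffOn ℝ 1 g U)
    (Xstar : Set (EuclideanSpace ℝ (Fin d)))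
    (hXstar : Xstar = {x ∈ X | ∀ y ∈ X, g x ≤ g y})
    (hVC : ∀ x ∈ X, ∀ xs ∈ Xstar, 0 ≤ ⟪gradient g x, x - xs⟫ ∧
      (⟪gradient g x, x - xs⟫ = 0 ↔ x ∈ Xstar)) :
    Convex ℝ Xstar ∧ IsCompact Xstar := by
  have hsub : Xstar ⊆ X := by
    rw [hXstar]; exact fun x hx => hx.1
  constructor
  · -- Convexity
    intro x hx y hy a b ha hb hab
    rcases eq_or_lt_of_le ha with ha0 | ha0
    · have hb1 : b = 1 := by linarith
      simpa [← ha0, hb1] using hy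
    rcases eq_or_lt_of_le hb with hb0 | hb0
    · have ha1 : a = 1 := by linarith
      simpa [← hb0, ha1] using hx
    set z := a • x + b • y with hz
    have hzX : z ∈ X := hXconvex (hsub hx) (hsub hy) ha hb hab
    have h1 := hVC z hzX x hx
    have h2 := hVC z hzX y hy
    have hzx : z - x = b • (y - x) := by
      rw [hz, smul_sub]
      have : a = 1 - b := by linarith
      rw [this]
      module
    have hzy : z - y = a • (x - y) := by
      rw [hz, smul_sub]
      have : b = 1 - a := by linarith
      rw [this]
      module
    set c := ⟪gradient g z, y - x⟫ with hc
    have e1 : ⟪gradient g z, z - x⟫ = b * c := by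
      rw [hzx, real_inner_smul_right]
    have e2 : ⟪gradient g z, z - y⟫ = a * (-c) := by
      rw [hzy, real_inner_smul_right, hc, ← inner_neg_right, neg_sub]
    have hc0 : c = 0 := by
      have g1 : 0 ≤ b * c := e1 ▸ h1.1
      have g2 : 0 ≤ a * (-c) := e2 ▸ h2.1
      nlinarith
    exact (h1.2).mp (by rw [e1, hc0, mul_zero])
  · -- Compactness
    have hgcont : ContinuousOn g X := (hgC1.continuousOn).mono hXU
    rcases X.eq_empty_or_nonempty with hX | hX
    · have : Xstar = ∅ := by
        rw [hXstar, hX]; simp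
      rw [this]; exact isCompact_empty
    · obtain ⟨x0, hx0X, hx0min⟩ := hXcompact.exists_isMinOn hX hgcont
      have hXs : Xstar = X ∩ g ⁻¹' Set.Iic (g x0) := by
        rw [hXstar]
        ext x
        constructor
        · rintro ⟨hxX, hmin⟩
          exact ⟨hxX, hmin x0 hx0X⟩
        · rintro ⟨hxX, hle⟩
          exact ⟨hxX, fun y hy => le_trans hle (hx0min hy)⟩
      have hclosed : IsClosed Xstar := by
        rw [hXs]
        exact hgcont.preimage_isClosed_of_isClosed hXcompact.isClosed isClosed_Iic
      exact hXcompact.of_isClosed_subset hclosed hsub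
end

section
/- Let d >= 2 and define g(x) = 2 * sum_{i=1}^d sqrt(1 + x_i) on X = [0,1]^d. Then: (i) g is not quasi-convex on X (in particular, for d = 2, taking x = (0,1) and x' = (1,0) gives g(x/2 + x'/2) = 2*sqrt(6) > 2*(1 + sqrt(2)) = max(g(x), g(x'))); and (ii) the problem min_{x in X} g(x) is variationally coherent with unique minimizer 0: indeed <grad g(x), x - 0> = sum_{i=1}^d x_i / sqrt(1 + x_i) > 0 for all x in [0,1]^d with x != 0. -/
/-!
The function is a sum `∑ᵢ F(xᵢ)` of one strictly concave, strictly increasing function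
`F(t) = 2√(1 + t)` of the coordinates. Strict concavity gives `F 0 + F 1 < 2 F(1/2)`, so at the
midpoint of two unit basis vectors the sum exceeds its common value at both endpoints: the
function is not quasi-convex. Monotonicity makes `0` the unique minimizer on the nonnegative
orthant, and the gradient `(1/√(1 + xᵢ))ᵢ` pairs with a nonzero `x ≥ 0` to a positive number.
-/

open scoped RealInnerProductSpace

open Finset

section CoordinateSums

variable {ι : Type*} [Fintype ι]

theorem sum_comp_eq_of_eq_zero_off_pair {f : ℝ → ℝ} {x : ι → ℝ} {i j : ι} (hij : i ≠ j)
    (hx : ∀ k, k ≠ i ∧ k ≠ j → x k = 0) :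
    ∑ k, f (x k) = f (x i) + f (x j) + (Fintype.card ι - 2) * f 0 := by
  have hsum : ∑ k, (f (x k) - f 0) = (f (x i) - f 0) + (f (x j) - f 0) :=
    Fintype.sum_eq_add i j hij fun k hk => by rw [hx k hk, sub_self]
  rw [sum_sub_distrib, sum_const, card_univ, nsmul_eq_mul] at hsum
  linarith

theorem not_forall_sum_comp_le_max [DecidableEq ι] {f : ℝ → ℝ} (hf : f 0 + f 1 < 2 * f (1 / 2))
    {X : Set (EuclideanSpace ℝ ι)} {i j : ι} (hij : i ≠ j)
    (hi : PiLp.single 2 i 1 ∈ X) (hj : PiLp.single 2 j 1 ∈ X) :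
    ¬ ∀ x ∈ X, ∀ x' ∈ X, ∀ t ∈ Set.Icc (0 : ℝ) 1,
      ∑ k, f ((t • x + (1 - t) • x') k) ≤ max (∑ k, f (x k)) (∑ k, f (x' k)) := by
  intro h
  have hmid := h _ hi _ hj (1 / 2) (by norm_num)
  rw [sum_comp_eq_of_eq_zero_off_pair hij, sum_comp_eq_of_eq_zero_off_pair hij,
    sum_comp_eq_of_eq_zero_off_pair hij] at hmid
  · norm_num [PiLp.single_apply, hij, hij.symm] at hmid
    rcases hmid with hmid | hmid <;> linarith
  all_goals intro k hk; simp [hk.1, hk.2]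

theorem EuclideanSpace.exists_pos_apply_of_nonneg_of_ne_zero {x : EuclideanSpace ℝ ι}
    (hx : ∀ i, 0 ≤ x i) (hx0 : x ≠ 0) : ∃ i, 0 < x i := by
  by_contra! h
  exact hx0 (PiLp.ext fun i => le_antisymm (h i) (hx i))

theorem sum_const_lt_sum_comp_of_nonneg_of_ne_zero {f : ℝ → ℝ} (hf : ∀ t, 0 < t → f 0 < f t)
    {x : EuclideanSpace ℝ ι} (hx : ∀ i, 0 ≤ x i) (hx0 : x ≠ 0) :
    ∑ _i : ι, f 0 < ∑ i, f (x i) := by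
  obtain ⟨i, hi⟩ := EuclideanSpace.exists_pos_apply_of_nonneg_of_ne_zero hx hx0
  refine sum_lt_sum (fun k _ => ?_) ⟨i, mem_univ i, hf _ hi⟩
  rcases (hx k).eq_or_lt with hk | hk
  · rw [← hk]
  · exact (hf _ hk).le

theorem hasGradientAt_sum_comp_apply {f f' : ℝ → ℝ} {x : EuclideanSpace ℝ ι}
    (hf : ∀ i, HasDerivAt f (f' (x i)) (x i)) :
    HasGradientAt (fun y : EuclideanSpace ℝ ι => ∑ i, f (y i))
      (WithLp.toLp 2 fun i => f' (x i)) x := by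
  have hcoord : ∀ i, HasFDerivAt (fun y : EuclideanSpace ℝ ι => f (y i))
      (f' (x i) • (EuclideanSpace.proj i : EuclideanSpace ℝ ι →L[ℝ] ℝ)) x := fun i =>
    (hf i).comp_hasFDerivAt (f := fun y : EuclideanSpace ℝ ι => y i) x
      (EuclideanSpace.proj i : EuclideanSpace ℝ ι →L[ℝ] ℝ).hasFDerivAt
  rw [hasGradientAt_iff_hasFDerivAt]
  refine (HasFDerivAt.fun_sum fun i (_ : i ∈ univ) => hcoord i).congr_fderiv ?_
  ext v
  simp [PiLp.inner_apply, mul_comm]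

end CoordinateSums

theorem sep_forall_le_eq_singleton {α β : Type*} [LinearOrder β] {X : Set α} {g : α → β} {a : α}
    (ha : a ∈ X) (hlt : ∀ y ∈ X, y ≠ a → g a < g y) :
    {x ∈ X | ∀ y ∈ X, g x ≤ g y} = {a} := by
  ext x
  refine ⟨fun ⟨hx, hmin⟩ => ?_, ?_⟩
  · by_contra hxa
    exact (hlt x hx hxa).not_ge (hmin a ha)
  · rintro rfl
    refine ⟨ha, fun y hy => ?_⟩
    rcases eq_or_ne y x with rfl | hyx
    · exact le_rfl
    · exact (hlt y hy hyx).le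

theorem hasDerivAt_two_mul_sqrt_one_add {t : ℝ} (ht : 0 ≤ t) :
    HasDerivAt (fun s => 2 * √(1 + s)) (1 / √(1 + t)) t := by
  have hpos : 0 < 1 + t := by linarith
  refine ((((hasDerivAt_id' t).const_add 1).sqrt hpos.ne').const_mul 2).congr_deriv ?_
  field_simp

theorem sqrt_two_add_one_lt_two_mul_sqrt_three_halves : √2 + 1 < 2 * √(3 / 2) := by
  have := Real.strictConcaveOn_sqrt.2 (Set.mem_Ici.2 zero_le_two) (Set.mem_Ici.2 zero_le_one)
    (by norm_num) (by norm_num : (0 : ℝ) < 1 / 2) (by norm_num : (0 : ℝ) < 1 / 2) (by norm_num)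
  norm_num only [smul_eq_mul, Real.sqrt_one] at this
  linarith

/-- For `d ≥ 2`, the function `g(x) = 2 ∑ᵢ √(1 + xᵢ)` on `X = [0,1]^d` is not
quasi-convex, yet the problem `min_{x ∈ X} g(x)` is variationally coherent with unique
minimizer `0`: the argmin set is `{0}` and `⟪∇g(x), x - 0⟫ = ∑ᵢ xᵢ/√(1 + xᵢ) > 0` for all
`x ∈ [0,1]^d` with `x ≠ 0`. -/
theorem sqrt_sum_example_not_quasiconvex_but_coherent {d : ℕ} (hd : 2 ≤ d)
    (X : Set (EuclideanSpace ℝ (Fin d)))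
    (hX : X = {x : EuclideanSpace ℝ (Fin d) | ∀ i, x i ∈ Set.Icc (0:ℝ) 1})
    (g : EuclideanSpace ℝ (Fin d) → ℝ)
    (hg : ∀ x, g x = 2 * ∑ i, Real.sqrt (1 + x i)) :
    (¬ ∀ x ∈ X, ∀ x' ∈ X, ∀ t ∈ Set.Icc (0:ℝ) 1,
        g (t • x + (1 - t) • x') ≤ max (g x) (g x')) ∧
    {x ∈ X | ∀ y ∈ X, g x ≤ g y} = {0} ∧
    (∀ x ∈ X, ⟪gradient g x, x - 0⟫ = ∑ i, x i / Real.sqrt (1 + x i)) ∧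
    (∀ x ∈ X, x ≠ 0 → 0 < ∑ i, x i / Real.sqrt (1 + x i)) := by
  subst hX
  set F : ℝ → ℝ := fun t => 2 * √(1 + t)
  obtain rfl : g = fun x => ∑ i, F (x i) := funext fun x => by rw [hg, mul_sum]
  have hF_lt : ∀ t, 0 < t → F 0 < F t := fun t ht => by simp only [F]; gcongr
  have hunit : ∀ i, PiLp.single 2 i (1 : ℝ) ∈
      {x : EuclideanSpace ℝ (Fin d) | ∀ i, x i ∈ Set.Icc 0 1} :=
    fun i k => by by_cases h : k = i <;> simp [PiLp.single_apply, h]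
  refine ⟨?_, ?_, fun x hx => ?_, fun x hx hx0 => ?_⟩
  · refine not_forall_sum_comp_le_max ?_ (i := ⟨0, by omega⟩) (j := ⟨1, by omega⟩) (by simp)
      (hunit _) (hunit _)
    have h32 : √(1 + 1 / 2 : ℝ) = √(3 / 2) := by norm_num
    simp only [F, add_zero, Real.sqrt_one, one_add_one_eq_two, h32]
    linarith [sqrt_two_add_one_lt_two_mul_sqrt_three_halves]
  · refine sep_forall_le_eq_singleton (fun i => by simp) fun y hy hy0 => ?_
    simpa using sum_const_lt_sum_comp_of_nonneg_of_ne_zero hF_lt (fun i => (hy i).1) hy0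
  · have hgrad := hasGradientAt_sum_comp_apply (f' := fun t => 1 / √(1 + t))
      fun i => hasDerivAt_two_mul_sqrt_one_add (hx i).1
    rw [hgrad.gradient, sub_zero, PiLp.inner_apply]
    simp [div_eq_mul_inv]
  · simpa using sum_const_lt_sum_comp_of_nonneg_of_ne_zero (f := fun t => t / √(1 + t))
      (fun t ht => by simp only [zero_div]; positivity) (fun i => (hx i).1) hx0
end

section
/- Let h be a K-strongly convex continuous regularizer on a compact convex set X in R^d, with mirror map Q(y) = argmax_{x in X} { <y, x> - h(x) } and Fenchel coupling F(p, y) = h(p) + h*(y) - <y, p>, where h*(y) = max_{x in X} { <y, x> - h(x) }. Then for all p in X and all y, y' in R^d: F(p, y') <= F(p, y) + <y' - y, Q(y) - p> + (1/(2K)) * ||y' - y||_*^2, where ||.||_* is the dual norm. -/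
open scoped RealInnerProductSpace

/-- For a `K`-strongly convex continuous regularizer `h` on a compact convex set
`X ⊆ ℝ^d` with mirror map `Q` and Fenchel coupling `F`, for all `p ∈ X` and all `y, y'`:
`F(p, y') ≤ F(p, y) + ⟪y' - y, Q(y) - p⟫ + (1/(2K))‖y' - y‖²`. -/
theorem fenchel_coupling_upper_bound {d : ℕ}
    (X : Set (EuclideanSpace ℝ (Fin d))) (hXcompact : IsCompact X) (hXconvex : Convex ℝ X)
    (hXne : X.Nonempty)
    (K : ℝ) (hK : 0 < K)
    (h : EuclideanSpace ℝ (Fin d) → ℝ) (hcont : ContinuousOn h X)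
    (hstrong : ∀ x ∈ X, ∀ x' ∈ X, ∀ t ∈ Set.Icc (0:ℝ) 1,
      h (t • x + (1 - t) • x') ≤ t * h x + (1 - t) * h x' - K / 2 * (t * (1 - t)) * ‖x - x'‖ ^ 2)
    (Q : EuclideanSpace ℝ (Fin d) → EuclideanSpace ℝ (Fin d))
    (hQ : ∀ y, Q y ∈ X ∧ ∀ x ∈ X, ⟪y, x⟫ - h x ≤ ⟪y, Q y⟫ - h (Q y))
    (hstar : EuclideanSpace ℝ (Fin d) → ℝ)
    (hhstar : ∀ y, hstar y = ⟪y, Q y⟫ - h (Q y))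
    (F : EuclideanSpace ℝ (Fin d) → EuclideanSpace ℝ (Fin d) → ℝ)
    (hF : ∀ p y, F p y = h p + hstar y - ⟪y, p⟫) :
    ∀ p ∈ X, ∀ y y' : EuclideanSpace ℝ (Fin d),
      F p y' ≤ F p y + ⟪y' - y, Q y - p⟫ + 1 / (2 * K) * ‖y' - y‖ ^ 2 := by
  intro p hp y y'
  obtain ⟨hQy, hmax⟩ := hQ y
  obtain ⟨hQy', _⟩ := hQ y'
  set x := Q y' with hxdef
  set x' := Q y with hx'def
  -- key strong-maximizer inequality
  have key : ⟪y, x - x'⟫ + K / 2 * ‖x - x'‖ ^ 2 ≤ h x - h x' := by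
    set a : ℝ := K / 2 * ‖x - x'‖ ^ 2 with ha
    set c : ℝ := h x - h x' - ⟪y, x - x'⟫ with hc
    have ha0 : 0 ≤ a := by positivity
    have hstep : ∀ t ∈ Set.Ioc (0:ℝ) 1, (1 - t) * a ≤ c := by
      intro t ht
      have hmem : t • x + (1 - t) • x' ∈ X :=
        hXconvex hQy' hQy ht.1.le (by linarith [ht.2]) (by ring)
      have h1 := hstrong x hQy' x' hQy t ⟨ht.1.le, ht.2⟩
      have h2 := hmax _ hmem
      have hinner : ⟪y, t • x + (1 - t) • x'⟫ = t * ⟪y, x⟫ + (1 - t) * ⟪y, x'⟫ := by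
        simp [inner_add_right, inner_smul_right]
      have hinner2 : ⟪y, x - x'⟫ = ⟪y, x⟫ - ⟪y, x'⟫ := inner_sub_right y x x'
      have hinner2t : t * ⟪y, x - x'⟫ = t * ⟪y, x⟫ - t * ⟪y, x'⟫ := by
        rw [hinner2]; ring
      rw [hinner] at h2
      have hmul : t * ((1 - t) * a) ≤ t * c := by
        rw [ha, hc]
        nlinarith [h1, h2, hinner2t]
      exact le_of_mul_le_mul_left hmul ht.1
    have hc0 : 0 ≤ c := by
      have := hstep 1 ⟨one_pos, le_refl 1⟩; linarith
    have hac : a ≤ c := by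
      by_contra hcon
      push_neg at hcon
      have hapos : 0 < a := lt_of_le_of_lt hc0 hcon
      have ht1 : (a - c) / (2 * a) ∈ Set.Ioc (0:ℝ) 1 := by
        constructor
        · exact div_pos (by linarith) (by linarith)
        · rw [div_le_one (by positivity)]; linarith
      have := hstep _ ht1
      have heq : (1 - (a - c) / (2 * a)) * a = a - (a - c) / 2 := by
        field_simp
      rw [heq] at this
      linarith
    simp only [ha, hc] at hac
    linarith
  have cauchy : ⟪y' - y, x - x'⟫ ≤ ‖y' - y‖ * ‖x - x'‖ := real_inner_le_norm _ _
  have amgm : ‖y' - y‖ * ‖x - x'‖ ≤ 1 / (2 * K) * ‖y' - y‖ ^ 2 + K / 2 * ‖x - x'‖ ^ 2 := by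
    have hsq := sq_nonneg (‖y' - y‖ - K * ‖x - x'‖)
    have h2K : (0:ℝ) < 2 * K := by linarith
    have key2 : 2 * K * (‖y' - y‖ * ‖x - x'‖) ≤ ‖y' - y‖ ^ 2 + K ^ 2 * ‖x - x'‖ ^ 2 := by
      nlinarith [hsq]
    calc ‖y' - y‖ * ‖x - x'‖ = (2 * K * (‖y' - y‖ * ‖x - x'‖)) / (2 * K) := by
            field_simp
      _ ≤ (‖y' - y‖ ^ 2 + K ^ 2 * ‖x - x'‖ ^ 2) / (2 * K) := by
            exact (div_le_div_iff_of_pos_right h2K).mpr key2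
      _ = 1 / (2 * K) * ‖y' - y‖ ^ 2 + K / 2 * ‖x - x'‖ ^ 2 := by
            field_simp
  have e1 : ⟪y' - y, x - x'⟫ = ⟪y', x⟫ - ⟪y', x'⟫ - ⟪y, x⟫ + ⟪y, x'⟫ := by
    simp [inner_sub_left, inner_sub_right]; ring
  have e2 : ⟪y' - y, x' - p⟫ = ⟪y', x'⟫ - ⟪y', p⟫ - ⟪y, x'⟫ + ⟪y, p⟫ := by
    simp [inner_sub_left, inner_sub_right]; ring
  have e3 : ⟪y, x - x'⟫ = ⟪y, x⟫ - ⟪y, x'⟫ := inner_sub_right y x x'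
  rw [hF, hF, hhstar, hhstar]
  rw [e3] at key
  nlinarith [key, cauchy, amgm, e1, e2]
end

section
/- Let X be a compact convex subset of R^d with a norm ||.||, let g be continuously differentiable on a neighborhood of X, and let x* in X be a gamma-sharp local minimum of g, i.e. g(x) >= g(x*) + gamma * ||x - x*|| for some gamma > 0 and all x in X sufficiently close to x*. Then <grad g(x*), z> >= gamma * ||z|| for all z in the tangent cone TC(x*) to X at x*; in particular, grad g(x*) lies in the topological interior of the dual cone TC*(x*). -/
/-!
Fix a direction `y` of the tangent cone and a norming functional `ℓ` (`‖ℓ‖ = 1`, `ℓ y = ‖y‖`).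
Since `γ ℓ (x - x*) ≤ γ ‖x - x*‖`, sharpness makes `x*` a local minimum of `g - γ ℓ` on `X`, and
first-order optimality along `y` gives `⟪∇g(x*), y⟫ ≥ γ ‖y‖`. The bound survives passage to the
closure, and by Cauchy–Schwarz it keeps every point of the ball of radius `γ` around `∇g(x*)`
inside the dual cone.
-/

open scoped RealInnerProductSpace

/-- The tangent cone to `X` at `p`: the closure of the set of all rays emanating from `p`
and intersecting `X`, i.e. the closure of `{t • (x - p) : x ∈ X, t ≥ 0}`. -/
def polarTangentCone {d : ℕ} (X : Set (EuclideanSpace ℝ (Fin d)))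
    (p : EuclideanSpace ℝ (Fin d)) : Set (EuclideanSpace ℝ (Fin d)) :=
  closure {z | ∃ x ∈ X, ∃ t : ℝ, 0 ≤ t ∧ z = t • (x - p)}

open Topology

def IsSharpMinOn {E : Type*} [NormedAddCommGroup E] (f : E → ℝ) (s : Set E) (a : E) (γ : ℝ) :
    Prop :=
  ∀ᶠ x in 𝓝[s] a, f a + γ * ‖x - a‖ ≤ f x

section
variable {E : Type*} [NormedAddCommGroup E] [NormedSpace ℝ E] {f : E → ℝ} {f' : StrongDual ℝ E}
  {s : Set E} {a y : E} {γ : ℝ}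

theorem IsSharpMinOn.mul_norm_le_of_hasFDerivWithinAt (h : IsSharpMinOn f s a γ) (hγ : 0 ≤ γ)
    (hf : HasFDerivWithinAt f f' s a) (hy : y ∈ posTangentConeAt s a) : γ * ‖y‖ ≤ f' y := by
  rcases eq_or_ne y 0 with rfl | hy0
  · simp
  obtain ⟨ℓ, hℓ, hℓy⟩ := exists_dual_vector ℝ y (norm_ne_zero_iff.2 hy0)
  have hmin : IsLocalMinOn (fun x ↦ f x - γ * ℓ x) s a := by
    filter_upwards [h] with x hx
    have hℓx : ℓ (x - a) ≤ ‖x - a‖ := by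
      simpa [hℓ] using (le_abs_self _).trans (ℓ.le_opNorm (x - a))
    rw [map_sub] at hℓx
    nlinarith
  have hderiv : HasFDerivWithinAt (fun x ↦ f x - γ * ℓ x) (f' - γ • ℓ) s a :=
    hf.sub (ℓ.hasFDerivWithinAt.const_smul γ)
  simpa [hℓy] using hmin.hasFDerivWithinAt_nonneg hderiv hy

theorem IsSharpMinOn.mul_norm_sub_le_of_convex (h : IsSharpMinOn f s a γ) (hγ : 0 ≤ γ)
    (hf : HasFDerivWithinAt f f' s a) (hs : Convex ℝ s) (ha : a ∈ s) {x : E} (hx : x ∈ s) :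
    γ * ‖x - a‖ ≤ f' (x - a) :=
  h.mul_norm_le_of_hasFDerivWithinAt hγ hf
    (sub_mem_posTangentConeAt_of_segment_subset (hs.segment_subset ha hx))
end

theorem mul_norm_le_inner_of_mem_polarTangentCone {d : ℕ} {X : Set (EuclideanSpace ℝ (Fin d))}
    {p v : EuclideanSpace ℝ (Fin d)} {γ : ℝ}
    (h : ∀ x ∈ X, γ * ‖x - p‖ ≤ ⟪v, x - p⟫) :
    ∀ z ∈ polarTangentCone X p, γ * ‖z‖ ≤ ⟪v, z⟫ := by
  have hclosed : IsClosed {z : EuclideanSpace ℝ (Fin d) | γ * ‖z‖ ≤ ⟪v, z⟫} :=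
    isClosed_le (continuous_const.mul continuous_norm) (continuous_const.inner continuous_id)
  refine fun z hz ↦ hclosed.closure_subset_iff.2 ?_ hz
  rintro _ ⟨x, hx, t, ht, rfl⟩
  rw [Set.mem_ofPred_eq, norm_smul, Real.norm_of_nonneg ht, real_inner_smul_right]
  nlinarith [h x hx]

theorem mem_interior_innerDual_of_mul_norm_le_inner {E : Type*} [NormedAddCommGroup E]
    [InnerProductSpace ℝ E] {K : Set E} {v : E} {γ : ℝ} (hγ : 0 < γ)
    (h : ∀ z ∈ K, γ * ‖z‖ ≤ ⟪v, z⟫) :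
    v ∈ interior {y | ∀ z ∈ K, 0 ≤ ⟪y, z⟫} := by
  refine mem_interior_iff_mem_nhds.2 (Metric.mem_nhds_iff.2 ⟨γ, hγ, fun y hy z hz ↦ ?_⟩)
  rw [Metric.mem_ball, dist_eq_norm] at hy
  calc 0 ≤ (γ - ‖y - v‖) * ‖z‖ := mul_nonneg (sub_nonneg.2 hy.le) (norm_nonneg z)
    _ ≤ ⟪v, z⟫ + ⟪y - v, z⟫ := by
      nlinarith [h z hz, neg_abs_le ⟪y - v, z⟫, abs_real_inner_le_norm (y - v) z]
    _ = ⟪y, z⟫ := by rw [← inner_add_left, add_sub_cancel]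

theorem sharp_min_grad_bound_on_tangent_cone_general {d : ℕ}
    (X : Set (EuclideanSpace ℝ (Fin d))) (hXconvex : Convex ℝ X)
    (g : EuclideanSpace ℝ (Fin d) → ℝ)
    (U : Set (EuclideanSpace ℝ (Fin d))) (hUopen : IsOpen U) (hXU : X ⊆ U)
    (hgC1 : ContDiffOn ℝ 1 g U)
    (xstar : EuclideanSpace ℝ (Fin d)) (hxstar : xstar ∈ X)
    (γ : ℝ) (hγ : 0 < γ)
    (hsharp : ∃ ε > 0, ∀ x ∈ X, ‖x - xstar‖ < ε → g xstar + γ * ‖x - xstar‖ ≤ g x) :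
    (∀ z ∈ polarTangentCone X xstar, γ * ‖z‖ ≤ ⟪gradient g xstar, z⟫) ∧
    gradient g xstar ∈
      interior {y : EuclideanSpace ℝ (Fin d) | ∀ z ∈ polarTangentCone X xstar, 0 ≤ ⟪y, z⟫} := by
  obtain ⟨ε, hε, hsharp⟩ := hsharp
  have hmin : IsSharpMinOn g X xstar γ := by
    filter_upwards [inter_mem_nhdsWithin X (Metric.ball_mem_nhds xstar hε)] with x ⟨hx, hxε⟩
    exact hsharp x hx (mem_ball_iff_norm.1 hxε)
  have hgrad : HasGradientAt g (gradient g xstar) xstar :=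
    ((hgC1.differentiableOn one_ne_zero).differentiableAt
      (hUopen.mem_nhds (hXU hxstar))).hasGradientAt
  have hray (x : EuclideanSpace ℝ (Fin d)) (hx : x ∈ X) :
      γ * ‖x - xstar‖ ≤ ⟪gradient g xstar, x - xstar⟫ :=
    hmin.mul_norm_sub_le_of_convex hγ.le hgrad.hasFDerivAt.hasFDerivWithinAt hXconvex hxstar hx
  have hcone := mul_norm_le_inner_of_mem_polarTangentCone hray
  exact ⟨hcone, mem_interior_innerDual_of_mul_norm_le_inner hγ hcone⟩

/-- If `x*` is a `γ`-sharp local minimum of `g` on the compact convex set `X`,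
then `⟪∇g(x*), z⟫ ≥ γ‖z‖` for all `z` in the tangent cone `TC(x*)`; in particular,
`∇g(x*)` lies in the topological interior of the dual cone `TC*(x*)`. -/
theorem sharp_min_grad_bound_on_tangent_cone {d : ℕ}
    (X : Set (EuclideanSpace ℝ (Fin d))) (hXcompact : IsCompact X) (hXconvex : Convex ℝ X)
    (g : EuclideanSpace ℝ (Fin d) → ℝ)
    (U : Set (EuclideanSpace ℝ (Fin d))) (hUopen : IsOpen U) (hXU : X ⊆ U)
    (hgC1 : ContDiffOn ℝ 1 g U)
    (xstar : EuclideanSpace ℝ (Fin d)) (hxstar : xstar ∈ X)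
    (γ : ℝ) (hγ : 0 < γ)
    (hsharp : ∃ ε > 0, ∀ x ∈ X, ‖x - xstar‖ < ε → g xstar + γ * ‖x - xstar‖ ≤ g x) :
    (∀ z ∈ polarTangentCone X xstar, γ * ‖z‖ ≤ ⟪gradient g xstar, z⟫) ∧
    gradient g xstar ∈
      interior {y : EuclideanSpace ℝ (Fin d) | ∀ z ∈ polarTangentCone X xstar, 0 ≤ ⟪y, z⟫} :=
  sharp_min_grad_bound_on_tangent_cone_general X hXconvex g U hUopen hXU hgC1 xstar hxstar γ hγ
    hsharp
end

section
/- Consider a generic linear program: X is a polytope in R^d (the convex hull of a nonempty finite set of points), g(x) = <c, x> + b is an affine function, and g attains its minimum over X at a unique point x*. Then x* is a sharp minimum: there exists gamma > 0 such that g(x) >= g(x*) + gamma * ||x - x*|| for all x in X. -/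
open scoped RealInnerProductSpace
open Filter Set Topology

/-!
Only the finitely many generators `s ≠ x*` of the polytope matter: each satisfies
`g x* < g s`, so a single `γ > 0` gives `g x* + γ‖s - x*‖ ≤ g s` on all of them. The function
`x ↦ g x - γ‖x - x*‖` is concave, so by the minimum principle it attains its minimum over the
convex hull at a generator, where it is at least `g x*`.
-/

theorem Set.Finite.exists_pos_add_mul_norm_sub_le {E : Type*} [SeminormedAddCommGroup E]
    {S : Set E} (hS : S.Finite) {g : E → ℝ} {p : E} (hlt : ∀ s ∈ S, s ≠ p → g p < g s) :
    ∃ γ > 0, ∀ s ∈ S, g p + γ * ‖s - p‖ ≤ g s := by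
  have hev : ∀ᶠ γ in 𝓝[>] (0 : ℝ), ∀ s ∈ S, g p + γ * ‖s - p‖ ≤ g s := by
    rw [hS.eventually_all]
    intro s hs
    rcases eq_or_ne s p with rfl | hsp
    · simp
    · have hlim : Tendsto (fun γ : ℝ => g p + γ * ‖s - p‖) (𝓝 0) (𝓝 (g p)) := by
        simpa using ((tendsto_id (x := 𝓝 (0 : ℝ))).mul_const ‖s - p‖).const_add (g p)
      exact nhdsWithin_le_nhds <|
        (hlim.eventually (gt_mem_nhds (hlt s hs hsp))).mono fun _ h => h.le
  obtain ⟨γ, hγS, hγ⟩ := (hev.and self_mem_nhdsWithin).exists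
  exact ⟨γ, hγ, hγS⟩

theorem ConcaveOn.add_mul_norm_sub_le_of_mem_convexHull {E : Type*} [NormedAddCommGroup E]
    [NormedSpace ℝ E] {S : Set E} {g : E → ℝ} (hg : ConcaveOn ℝ (convexHull ℝ S) g)
    {p : E} {γ : ℝ} (hγ : 0 ≤ γ) (hS : ∀ s ∈ S, g p + γ * ‖s - p‖ ≤ g s)
    {x : E} (hx : x ∈ convexHull ℝ S) : g p + γ * ‖x - p‖ ≤ g x := by
  have hdist : ConvexOn ℝ (convexHull ℝ S) fun y => γ * ‖y - p‖ := by
    simpa [dist_eq_norm] using (convexOn_dist p (convex_convexHull ℝ S)).smul hγ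
  obtain ⟨y, hyS, hy⟩ := (hg.sub hdist).exists_le_of_mem_convexHull (subset_convexHull ℝ S) hx
  simp only [Pi.sub_apply] at hy
  linarith [hS y hyS]

theorem generic_linear_program_sharp_minimum_general {d : ℕ}
    (S : Finset (EuclideanSpace ℝ (Fin d)))
    (X : Set (EuclideanSpace ℝ (Fin d))) (hX : X = convexHull ℝ (S : Set (EuclideanSpace ℝ (Fin d))))
    (c : EuclideanSpace ℝ (Fin d)) (b : ℝ)
    (g : EuclideanSpace ℝ (Fin d) → ℝ) (hg : ∀ x, g x = ⟪c, x⟫ + b)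
    (xstar : EuclideanSpace ℝ (Fin d))
    (hunique : ∀ x ∈ X, x ≠ xstar → g xstar < g x) :
    ∃ γ > 0, ∀ x ∈ X, g xstar + γ * ‖x - xstar‖ ≤ g x := by
  subst hX
  have hconc : ConcaveOn ℝ univ g := by
    rw [show g = fun x => innerₛₗ ℝ c x + b from funext hg]
    exact ((innerₛₗ ℝ c).concaveOn convex_univ).add_const b
  obtain ⟨γ, hγ, hS⟩ := S.finite_toSet.exists_pos_add_mul_norm_sub_le
    fun s hs hsp => hunique s (subset_convexHull ℝ _ hs) hsp
  exact ⟨γ, hγ, fun x hx => (hconc.subset (subset_univ _) (convex_convexHull ℝ _))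
    |>.add_mul_norm_sub_le_of_mem_convexHull hγ.le hS hx⟩

/-- The (necessarily unique) solution of a generic linear program is sharp:
if `X` is a polytope, `g(x) = ⟪c, x⟫ + b` is affine, and `g` attains its minimum over `X`
at a unique point `x*`, then there is `γ > 0` with `g(x) ≥ g(x*) + γ‖x - x*‖` on `X`. -/
theorem generic_linear_program_sharp_minimum {d : ℕ}
    (S : Finset (EuclideanSpace ℝ (Fin d))) (hS : S.Nonempty)
    (X : Set (EuclideanSpace ℝ (Fin d))) (hX : X = convexHull ℝ (S : Set (EuclideanSpace ℝ (Fin d))))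
    (c : EuclideanSpace ℝ (Fin d)) (b : ℝ)
    (g : EuclideanSpace ℝ (Fin d) → ℝ) (hg : ∀ x, g x = ⟪c, x⟫ + b)
    (xstar : EuclideanSpace ℝ (Fin d)) (hxstar : xstar ∈ X)
    (hmin : ∀ x ∈ X, g xstar ≤ g x)
    (hunique : ∀ x ∈ X, x ≠ xstar → g xstar < g x) :
    ∃ γ > 0, ∀ x ∈ X, g xstar + γ * ‖x - xstar‖ ≤ g x :=
  generic_linear_program_sharp_minimum_general S X hX c b g hg xstar hunique
end

section
/- Let X be a compact convex subset of R^d with a norm ||.||, let g be continuously differentiable on a neighborhood of X, and let x* in X be a gamma-sharp local minimum of g. Then x* is locally variationally coherent: there exists an open neighborhood U of x* such that <grad g(x), x - x*> > 0 for all x in (U intersect X) with x != x* (and equal to 0 for x = x*). -/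
/-!
Restricting `g` to the segment from `x*` to `x ∈ X` (which stays in `X` by convexity), sharpness
bounds the difference quotients at `t = 0⁺` below by `γ ‖x - x*‖`, hence
`⟪∇g(x*), x - x*⟫ ≥ γ ‖x - x*‖` for every `x ∈ X`. Since `g` is `C¹`, the gradient moves by less
than `γ` near `x*`, and this slack of `γ ‖x - x*‖` keeps `⟪∇g(x), x - x*⟫` positive there.
-/

open scoped RealInnerProductSpace Topology
open Filter

theorem le_fderiv_sub_of_sharp_min {E : Type*} [NormedAddCommGroup E] [NormedSpace ℝ E]
    {X : Set E} (hX : Convex ℝ X) {g : E → ℝ} {g' : E →L[ℝ] ℝ} {x₀ x : E} {γ : ℝ}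
    (hg : HasFDerivAt g g' x₀) (hx₀ : x₀ ∈ X) (hx : x ∈ X)
    (hsharp : ∀ᶠ y in 𝓝[X] x₀, g x₀ + γ * ‖y - x₀‖ ≤ g y) :
    γ * ‖x - x₀‖ ≤ g' (x - x₀) := by
  set c := AffineMap.lineMap x₀ x (k := ℝ)
  have hderiv : HasDerivAt (g ∘ c) (g' (x - x₀)) 0 := by
    refine HasFDerivAt.comp_hasDerivAt 0 ?_ AffineMap.hasDerivAt_lineMap
    simpa [c] using hg
  have hc : Tendsto c (𝓝[>] 0) (𝓝[X] x₀) := by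
    refine tendsto_nhdsWithin_iff.mpr ⟨?_, ?_⟩
    · simpa [c] using (AffineMap.lineMap_continuous.tendsto' 0 _ (by simp)).mono_left
        nhdsWithin_le_nhds
    · filter_upwards [Ioc_mem_nhdsGT zero_lt_one] with t ht
      exact hX.lineMap_mem hx₀ hx (Set.Ioc_subset_Icc_self ht)
  have hslope : ∀ᶠ t in 𝓝[>] 0, γ * ‖x - x₀‖ ≤ slope (g ∘ c) 0 t := by
    filter_upwards [hc.eventually hsharp, self_mem_nhdsWithin] with t hsharp_t (ht : 0 < t)
    have hnorm : ‖c t - x₀‖ = t * ‖x - x₀‖ := by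
      rw [← dist_eq_norm, dist_lineMap_left, Real.norm_of_nonneg ht.le, dist_eq_norm']
    rw [slope_def_field, le_div_iff₀ (by simpa using ht)]
    simp only [Function.comp_apply, c, AffineMap.lineMap_apply_zero] at hsharp_t hnorm ⊢
    rw [hnorm] at hsharp_t
    linarith
  exact ge_of_tendsto ((hasDerivAt_iff_tendsto_slope.mp hderiv).mono_left
    (nhdsWithin_mono _ fun _ ht => ne_of_gt (Set.mem_Ioi.mp ht))) hslope

theorem le_inner_gradient_sub_of_sharp_min {F : Type*} [NormedAddCommGroup F]
    [InnerProductSpace ℝ F] [CompleteSpace F] {X : Set F} (hX : Convex ℝ X) {g : F → ℝ}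
    {x₀ x : F} {γ : ℝ} (hg : DifferentiableAt ℝ g x₀) (hx₀ : x₀ ∈ X) (hx : x ∈ X)
    (hsharp : ∀ᶠ y in 𝓝[X] x₀, g x₀ + γ * ‖y - x₀‖ ≤ g y) :
    γ * ‖x - x₀‖ ≤ ⟪gradient g x₀, x - x₀⟫ := by
  simpa [gradient] using le_fderiv_sub_of_sharp_min hX hg.hasFDerivAt hx₀ hx hsharp

theorem ContDiffAt.continuousAt_gradient {F : Type*} [NormedAddCommGroup F]
    [InnerProductSpace ℝ F] [CompleteSpace F] {g : F → ℝ} {x : F} {n : WithTop ℕ∞}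
    (hg : ContDiffAt ℝ n g x) (hn : n ≠ 0) : ContinuousAt (gradient g) x :=
  (InnerProductSpace.toDual ℝ F).symm.continuous.continuousAt.comp (hg.continuousAt_fderiv hn)

theorem real_inner_pos_of_norm_sub_lt {F : Type*} [NormedAddCommGroup F]
    [InnerProductSpace ℝ F] {a b v : F} {γ : ℝ} (hv : v ≠ 0) (ha : γ * ‖v‖ ≤ ⟪a, v⟫)
    (hab : ‖b - a‖ < γ) : 0 < ⟪b, v⟫ := by
  have hv_pos : 0 < ‖v‖ := norm_pos_iff.mpr hv
  have hperturb : -(‖b - a‖ * ‖v‖) ≤ ⟪b - a, v⟫ :=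
    neg_le_of_abs_le (abs_real_inner_le_norm _ _)
  calc 0 < (γ - ‖b - a‖) * ‖v‖ := mul_pos (sub_pos.mpr hab) hv_pos
    _ ≤ ⟪a, v⟫ + ⟪b - a, v⟫ := by linarith
    _ = ⟪b, v⟫ := by rw [← inner_add_left, add_sub_cancel]

theorem sharp_min_locally_variationally_coherent_general {d : ℕ}
    (X : Set (EuclideanSpace ℝ (Fin d))) (hXconvex : Convex ℝ X)
    (g : EuclideanSpace ℝ (Fin d) → ℝ)
    (U : Set (EuclideanSpace ℝ (Fin d))) (hUopen : IsOpen U) (hXU : X ⊆ U)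
    (hgC1 : ContDiffOn ℝ 1 g U)
    (xstar : EuclideanSpace ℝ (Fin d)) (hxstar : xstar ∈ X)
    (γ : ℝ) (hγ : 0 < γ)
    (hsharp : ∃ ε > 0, ∀ x ∈ X, ‖x - xstar‖ < ε → g xstar + γ * ‖x - xstar‖ ≤ g x) :
    ∃ U' : Set (EuclideanSpace ℝ (Fin d)), IsOpen U' ∧ xstar ∈ U' ∧
      (∀ x ∈ U' ∩ X, x ≠ xstar → 0 < ⟪gradient g x, x - xstar⟫) ∧
      ⟪gradient g xstar, xstar - xstar⟫ = 0 := by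
  have hsharp_within : ∀ᶠ y in 𝓝[X] xstar, g xstar + γ * ‖y - xstar‖ ≤ g y := by
    obtain ⟨ε, hε, hsharp⟩ := hsharp
    rw [eventually_nhdsWithin_iff, Metric.eventually_nhds_iff]
    exact ⟨ε, hε, fun y hy hyX => hsharp y hyX (by rwa [← dist_eq_norm])⟩
  have hgC1_at : ContDiffAt ℝ 1 g xstar := hgC1.contDiffAt (hUopen.mem_nhds (hXU hxstar))
  have hgrad_near : ∀ᶠ x in 𝓝 xstar, ‖gradient g x - gradient g xstar‖ < γ := by
    simpa only [← dist_eq_norm] using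
      (hgC1_at.continuousAt_gradient one_ne_zero).eventually (Metric.ball_mem_nhds _ hγ)
  obtain ⟨U', hU', hU'open, hxstarU'⟩ := eventually_nhds_iff.mp hgrad_near
  refine ⟨U', hU'open, hxstarU', fun x ⟨hxU', hxX⟩ hne => ?_, by simp⟩
  exact real_inner_pos_of_norm_sub_lt (sub_ne_zero.mpr hne)
    (le_inner_gradient_sub_of_sharp_min hXconvex (hgC1_at.differentiableAt one_ne_zero)
      hxstar hxX hsharp_within) (hU' x hxU')

/-- A `γ`-sharp local minimum `x*` of `g` on a compact convex set `X` is locally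
variationally coherent: there exists an open neighborhood `U'` of `x*` such that
`⟪∇g(x), x - x*⟫ > 0` for all `x ∈ U' ∩ X` with `x ≠ x*` (and `= 0` for `x = x*`). -/
theorem sharp_min_locally_variationally_coherent {d : ℕ}
    (X : Set (EuclideanSpace ℝ (Fin d))) (hXcompact : IsCompact X) (hXconvex : Convex ℝ X)
    (g : EuclideanSpace ℝ (Fin d) → ℝ)
    (U : Set (EuclideanSpace ℝ (Fin d))) (hUopen : IsOpen U) (hXU : X ⊆ U)
    (hgC1 : ContDiffOn ℝ 1 g U)
    (xstar : EuclideanSpace ℝ (Fin d)) (hxstar : xstar ∈ X)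
    (γ : ℝ) (hγ : 0 < γ)
    (hsharp : ∃ ε > 0, ∀ x ∈ X, ‖x - xstar‖ < ε → g xstar + γ * ‖x - xstar‖ ≤ g x) :
    ∃ U' : Set (EuclideanSpace ℝ (Fin d)), IsOpen U' ∧ xstar ∈ U' ∧
      (∀ x ∈ U' ∩ X, x ≠ xstar → 0 < ⟪gradient g x, x - xstar⟫) ∧
      ⟪gradient g xstar, xstar - xstar⟫ = 0 :=
  sharp_min_locally_variationally_coherent_general X hXconvex g U hUopen hXU hgC1 xstar hxstar γ hγ
    hsharp
end

section
/- Let h be a K-strongly convex continuous regularizer on a compact convex set X in R^d with mirror map Q(y) = argmax_{x in X} { <y, x> - h(x) }. If y* in R^d satisfies Q(y*) = x*, then Q(y* + w) = x* for every w in the polar cone PC(x*) to X at x*; that is, y* + PC(x*) is contained in Q^{-1}(x*). -/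
open scoped RealInnerProductSpace

/-- The polar cone to `X` at `p`: `{y : ⟪y, z⟫ ≤ 0 for all z ∈ TC(p)}`. -/
def polarCone {d : ℕ} (X : Set (EuclideanSpace ℝ (Fin d)))
    (p : EuclideanSpace ℝ (Fin d)) : Set (EuclideanSpace ℝ (Fin d)) :=
  {y | ∀ z ∈ polarTangentCone X p, @inner ℝ _ _ y z ≤ 0}

/-- For a `K`-strongly convex continuous regularizer `h` on a compact convex
set `X` with mirror map `Q`, if `Q(y*) = x*` then `Q(y* + w) = x*` for every `w` in the polar
cone `PC(x*)`; that is, `y* + PC(x*) ⊆ Q⁻¹(x*)`. -/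
theorem mirror_map_preimage_contains_polar_cone {d : ℕ}
    (X : Set (EuclideanSpace ℝ (Fin d))) (hXcompact : IsCompact X) (hXconvex : Convex ℝ X)
    (hXne : X.Nonempty)
    (K : ℝ) (hK : 0 < K)
    (h : EuclideanSpace ℝ (Fin d) → ℝ) (hcont : ContinuousOn h X)
    (hstrong : ∀ x ∈ X, ∀ x' ∈ X, ∀ t ∈ Set.Icc (0:ℝ) 1,
      h (t • x + (1 - t) • x') ≤ t * h x + (1 - t) * h x' - K / 2 * (t * (1 - t)) * ‖x - x'‖ ^ 2)
    (Q : EuclideanSpace ℝ (Fin d) → EuclideanSpace ℝ (Fin d))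
    (hQ : ∀ y, Q y ∈ X ∧ ∀ x ∈ X, ⟪y, x⟫ - h x ≤ ⟪y, Q y⟫ - h (Q y))
    (xstar ystar : EuclideanSpace ℝ (Fin d)) (hQY : Q ystar = xstar) :
    ∀ w ∈ polarCone X xstar, Q (ystar + w) = xstar := by
  intro w hw
  set x' := Q (ystar + w) with hx'def
  obtain ⟨hx'X, hmax'⟩ := hQ (ystar + w)
  obtain ⟨hxX, hmax⟩ := hQ ystar
  rw [hQY] at hxX hmax
  -- A : maximality of x' for ystar + w, applied to xstar
  have A := hmax' xstar hxX
  -- B : maximality of xstar for ystar, applied to x'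
  have B := hmax x' hx'X
  -- w inner bound
  have hTC : x' - xstar ∈ polarTangentCone X xstar := by
    apply subset_closure
    exact ⟨x', hx'X, 1, zero_le_one, by simp⟩
  have hwle : ⟪w, x' - xstar⟫ ≤ 0 := hw _ hTC
  rw [inner_sub_right] at hwle
  rw [inner_add_left, inner_add_left] at A
  -- combining: equality of values
  have E : ⟪ystar, xstar⟫ - h xstar ≤ ⟪ystar, x'⟫ - h x' := by linarith
  -- strong convexity midpoint
  have hmid := hstrong x' hx'X xstar hxX (1/2) ⟨by norm_num, by norm_num⟩
  have hmX : (1/2 : ℝ) • x' + (1 - 1/2 : ℝ) • xstar ∈ X :=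
    hXconvex hx'X hxX (by norm_num) (by norm_num) (by norm_num)
  have hmmax := hmax _ hmX
  have hinner : ⟪ystar, (1/2 : ℝ) • x' + (1 - 1/2 : ℝ) • xstar⟫
      = (1/2) * ⟪ystar, x'⟫ + (1/2) * ⟪ystar, xstar⟫ := by
    rw [inner_add_right, inner_smul_right, inner_smul_right]; norm_num
  rw [hinner] at hmmax
  have hnorm : ‖x' - xstar‖ ^ 2 ≤ 0 := by nlinarith
  have : x' - xstar = 0 := by
    have := sq_nonneg ‖x' - xstar‖
    have : ‖x' - xstar‖ = 0 := by nlinarith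
    simpa using this
  have := sub_eq_zero.mp this
  simpa [hx'def] using this
end
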